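/- Let n ≥ 2, let δ > 0, let R be a proper rigid n-system of mesh δ, and let x ∈ F(R, e_1). For any ε_1 > 0, ε_2 > 0 and any Q > 0, there exist positive multiples u and v of δ with Q < u < v and a rigid n-system P : [u, v] → Δ_n of mesh δ such that, writing e = (1, …, 1) ∈ ℝ^n and with inequalities between vectors meant coordinatewise: (i) the right derivative of P at u equals e_1; (ii) (1 + 3nε_1)^{-1}(x + ε_1 e) ≤ u^{-1}P(u) ≤ x + 4ε_1 e; (iii) x − 2ε_2 e ≤ v^{-1}P(v) ≤ x + 2ε_2 e; (iv) dist(F(R), E) ≤ 4(n + 1)ε_1, where E = {q^{-1}P(q) : q ∈ [u, v]}. -/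

import Mathlib

open Filter Set Pointwise Topology

noncomputable section

/-- Points of `ℝ^n`. -/
abbrev RVec (n : ℕ) := Fin n → ℝ

/-- The vector of `ℝ^n` with a `1` in position `j` (0-based) and `0` elsewhere;
`eVec n 0` is the first canonical basis vector `e_1`. -/
def eVec (n : ℕ) (j : ℕ) : RVec n := fun i => if (i : ℕ) = j then 1 else 0

/-- `P` is an `n`-system on the subinterval `I` of `[0,∞)`:
`I` is an order-connected subset of `[0,∞)` with nonempty interior, and conditions
(S1), (S2), (S3) hold at every `q ∈ I`. -/
def IsNSystem (n : ℕ) (I : Set ℝ) (P : ℝ → RVec n) : Prop :=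
  I ⊆ Set.Ici (0 : ℝ) ∧ I.OrdConnected ∧ (interior I).Nonempty ∧
  ∀ q ∈ I,
    ((∀ i, 0 ≤ P q i) ∧ Monotone (P q) ∧ (∑ i, P q i) = q) ∧
    ∃ ε > (0 : ℝ), ∃ k ℓ : Fin n,
      (∀ t ∈ I ∩ Set.Icc (q - ε) q, P t = P q + (t - q) • eVec n ℓ) ∧
      (∀ t ∈ I ∩ Set.Icc q (q + ε), P t = P q + (t - q) • eVec n k) ∧
      (q ∈ interior I → ℓ < k → ∀ i : Fin n, ℓ ≤ i → i ≤ k → P q i = P q ℓ)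

/-- `P` is a proper `n`-system on `I`: it is an `n`-system whose first component is
unbounded (by the monotonicity (S1) of the components, this is equivalent to all
components simultaneously exceeding any given bound). -/
def IsProperSys (n : ℕ) (I : Set ℝ) (P : ℝ → RVec n) : Prop :=
  IsNSystem n I P ∧ ∀ M : ℝ, ∃ q ∈ I, ∀ i, M < P q i

/-- The set `F(P)` of limits of `q_i⁻¹ • P(q_i)` along strictly increasing unbounded
sequences `(q_i)` in `I`. -/
def FSet (n : ℕ) (I : Set ℝ) (P : ℝ → RVec n) : Set (RVec n) :=
  {x | ∃ q : ℕ → ℝ, (∀ i, q i ∈ I) ∧ StrictMono q ∧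
    Tendsto q atTop atTop ∧ Tendsto (fun i => (q i)⁻¹ • P (q i)) atTop (𝓝 x)}

/-- The set `F(P, e₁)`: as `F(P)`, but with the extra requirement that the right
derivative of `P` at each `q_i` is the first basis vector `e_1`. -/
def FSetE1 (n : ℕ) (I : Set ℝ) (P : ℝ → RVec n) : Set (RVec n) :=
  {x | ∃ q : ℕ → ℝ, (∀ i, q i ∈ I) ∧ StrictMono q ∧ Tendsto q atTop atTop ∧
    (∀ i, ∃ ε > (0 : ℝ), ∀ t ∈ I ∩ Set.Icc (q i) (q i + ε),
      P t = P (q i) + (t - q i) • eVec n 0) ∧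
    Tendsto (fun i => (q i)⁻¹ • P (q i)) atTop (𝓝 x)}

/-- `q` is a switch number of the `n`-system `P` on `I`: a point of `I` on the boundary
of `I`, or an interior point where the local slopes `e_k` (right) and `e_ℓ` (left)
from (S2) satisfy `k < ℓ`. -/
def IsSwitchNumber (n : ℕ) (I : Set ℝ) (P : ℝ → RVec n) (q : ℝ) : Prop :=
  q ∈ I ∧ (q ∈ frontier I ∨
    (q ∈ interior I ∧ ∃ ε > (0 : ℝ), ∃ k ℓ : Fin n, k < ℓ ∧
      (∀ t ∈ I ∩ Set.Icc (q - ε) q, P t = P q + (t - q) • eVec n ℓ) ∧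
      (∀ t ∈ I ∩ Set.Icc q (q + ε), P t = P q + (t - q) • eVec n k)))

/-- `q` is a division number of the `n`-system `P` on `I`: a point of `I` on the boundary
of `I`, or an interior point where `P` is not differentiable, i.e. where the left and
right slopes from (S2) differ. -/
def IsDivisionNumber (n : ℕ) (I : Set ℝ) (P : ℝ → RVec n) (q : ℝ) : Prop :=
  q ∈ I ∧ (q ∈ frontier I ∨
    (q ∈ interior I ∧ ∃ ε > (0 : ℝ), ∃ k ℓ : Fin n, k ≠ ℓ ∧
      (∀ t ∈ I ∩ Set.Icc (q - ε) q, P t = P q + (t - q) • eVec n ℓ) ∧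
      (∀ t ∈ I ∩ Set.Icc q (q + ε), P t = P q + (t - q) • eVec n k)))

/-- A non-degenerate `n`-system: an `n`-system whose domain is a closed subinterval
of `(0,∞)` and whose switch points all have `n` distinct positive coordinates. -/
def IsNonDegenerate (n : ℕ) (I : Set ℝ) (P : ℝ → RVec n) : Prop :=
  IsNSystem n I P ∧ IsClosed I ∧ I ⊆ Set.Ioi (0 : ℝ) ∧
  ∀ q, IsSwitchNumber n I P q → (∀ i, 0 < P q i) ∧ StrictMono (P q)

/-- A rigid `n`-system of mesh `δ`: a non-degenerate `n`-system whose switch points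
belong to `δℤ^n`. -/
def IsRigid (n : ℕ) (δ : ℝ) (I : Set ℝ) (P : ℝ → RVec n) : Prop :=
  IsNonDegenerate n I P ∧
  ∀ q, IsSwitchNumber n I P q → ∀ i, ∃ m : ℤ, P q i = δ * m

/-- A self-similar system: the domain is unbounded and there is `ρ > 1` with
`P(ρq) = ρ • P(q)` for all `q` in the domain. -/
def IsSelfSimilar (n : ℕ) (I : Set ℝ) (P : ℝ → RVec n) : Prop :=
  ¬ BddAbove I ∧ ∃ ρ : ℝ, 1 < ρ ∧ ∀ q ∈ I, ρ * q ∈ I ∧ P (ρ * q) = ρ • P q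

/-- The cube `[-ε, ε]^n`. -/
def cubeNbhd (n : ℕ) (ε : ℝ) : Set (RVec n) := {y | ∀ i, |y i| ≤ ε}

/-- The distance `dist(E, F)`: the infimum of all `ε > 0` such that
`E ⊆ F + [-ε,ε]^n` and `F ⊆ E + [-ε,ε]^n`. -/
def cubeDist (n : ℕ) (E F : Set (RVec n)) : ℝ :=
  sInf {ε : ℝ | 0 < ε ∧ E ⊆ F + cubeNbhd n ε ∧ F ⊆ E + cubeNbhd n ε}

/-- `μ_T(P)`: the point of `ℝ^m` whose `j`-th coordinate is
`liminf_{q → ∞, q ∈ I} T_j(P(q))/q`. -/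
def muT (n m : ℕ) (T : RVec n → RVec m) (I : Set ℝ) (P : ℝ → RVec n) : RVec m :=
  fun j => Filter.liminf (fun q => T (P q) j / q) (atTop ⊓ 𝓟 I)

/-- `liminf` of a sequence of subsets of `ℝ^n`: the set of limits of convergent
sequences `(x_i)` with `x_i ∈ F i` for every `i`. -/
def setLiminf (n : ℕ) (F : ℕ → Set (RVec n)) : Set (RVec n) :=
  {x | ∃ y : ℕ → RVec n, (∀ i, y i ∈ F i) ∧ Tendsto y atTop (𝓝 x)}

/-- `limsup` of a sequence of subsets of `ℝ^n`: the set of accumulation points of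
sequences `(x_i)` with `x_i ∈ F i` for every `i`, i.e. limits of convergent
subsequences. -/
def setLimsup (n : ℕ) (F : ℕ → Set (RVec n)) : Set (RVec n) :=
  {x | ∃ (y : ℕ → RVec n) (φ : ℕ → ℕ), (∀ i, y i ∈ F i) ∧ StrictMono φ ∧
    Tendsto (y ∘ φ) atTop (𝓝 x)}

/-!
Pick grid times `a < b` in `δℤ` at which `R` takes rigid points: `a` just before a time `c` at
which `R` leaves along `e₁` with `c⁻¹ R(c)` close to `x` (the start of that `e₁`-segment is a
switch number of `R`, and the grid point `a` is found on that segment), `a` so late that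
`s⁻¹ R(s)` stays `ε₁`-close to `F(R)` after `a`, and `b` of the same kind, so late that
`[a, b]` already `ε₁`-approximates every point of `F(R)`. Then `P(q) = R(q - n h) + h e`
on `[a + n h, b + n h]`, with `h ∈ δℤ` about `ε₁ a`, is again rigid of mesh `δ`: its switch
points are those of `R|[a,b]` raised by `h`. Raising by `h` moves `q⁻¹ P(q)` by at most
`2 n ε₁` from `s⁻¹ R(s)`, `s = q - n h`, which gives (iv); at `u` it lifts every coordinate
by about `ε₁` above `x`, which gives (ii), and at `v` it is negligible against `b`, giving (iii).
-/

section LimitSet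

variable {n : ℕ} {I : Set ℝ} {R : ℝ → RVec n}

lemma IsNSystem.coord_le (hR : IsNSystem n I R) {s : ℝ} (hs : s ∈ I) (i : Fin n) :
    0 ≤ R s i ∧ R s i ≤ s := by
  obtain ⟨hnonneg, -, hsum⟩ := (hR.2.2.2 s hs).1
  exact ⟨hnonneg i, (Finset.single_le_sum (fun j _ => hnonneg j) (Finset.mem_univ i)).trans hsum.le⟩

lemma IsNSystem.inv_smul_mem_unitCube (hR : IsNSystem n I R) (hI : I ⊆ Ioi 0) {s : ℝ}
    (hs : s ∈ I) : s⁻¹ • R s ∈ univ.pi fun _ : Fin n => Icc (0 : ℝ) 1 := by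
  intro i _
  have hs0 : 0 < s := hI hs
  obtain ⟨h0, h1⟩ := hR.coord_le hs i
  simp only [Pi.smul_apply, smul_eq_mul, mem_Icc]
  exact ⟨by positivity, by simpa [inv_mul_le_iff₀ hs0] using h1⟩

variable {K : Set (RVec n)}

lemma FSet_subset_of_isClosed (hK : IsClosed K) (hRK : ∀ s ∈ I, s⁻¹ • R s ∈ K) :
    FSet n I R ⊆ K := by
  rintro y ⟨q, hqI, -, -, hq⟩
  exact hK.mem_of_tendsto hq (Eventually.of_forall fun k => hRK _ (hqI k))

lemma eventually_near_FSet (hK : IsCompact K) (hRK : ∀ s ∈ I, s⁻¹ • R s ∈ K) {ε : ℝ}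
    (hε : 0 < ε) : ∀ᶠ s in atTop, s ∈ I → ∃ y ∈ FSet n I R, dist (s⁻¹ • R s) y < ε := by
  by_contra hfar
  simp only [not_eventually, Classical.not_imp, not_exists, not_and, not_lt, frequently_atTop] at hfar
  choose s hsA hsI hsfar using hfar
  have hs : Tendsto (fun k : ℕ => s k) atTop atTop :=
    tendsto_atTop_mono (fun k => hsA k) tendsto_natCast_atTop_atTop
  obtain ⟨φ, hφ, hsφ⟩ := strictMono_subseq_of_tendsto_atTop hs
  obtain ⟨y, -, ψ, hψ, hy⟩ := hK.tendsto_subseq fun k => hRK _ (hsI (φ k))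
  have hyF : y ∈ FSet n I R :=
    ⟨fun k => s (φ (ψ k)), fun k => hsI _, hsφ.comp hψ,
      (hs.comp hφ.tendsto_atTop).comp hψ.tendsto_atTop, hy⟩
  obtain ⟨k, hk⟩ := (Metric.tendsto_nhds.mp hy ε hε).exists
  exact (hsfar _ y hyF).not_gt hk

lemma eventually_window_near_FSet (hK : IsCompact K) (hRK : ∀ s ∈ I, s⁻¹ • R s ∈ K) {ε : ℝ}
    (hε : 0 < ε) (A : ℝ) :
    ∀ᶠ B in atTop, ∀ y ∈ FSet n I R, ∃ s ∈ I, A ≤ s ∧ s ≤ B ∧ dist (s⁻¹ • R s) y < ε := by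
  have hcover : closure (FSet n I R) ⊆
      ⋃ s ∈ I ∩ Ici A, Metric.ball (s⁻¹ • R s) ε := by
    intro z hz
    obtain ⟨y, ⟨q, hqI, -, hq, hqy⟩, hzy⟩ := Metric.mem_closure_iff.mp hz (ε / 2) (by positivity)
    obtain ⟨k, hkA, hk⟩ := ((hq.eventually_ge_atTop A).and
      (Metric.tendsto_nhds.mp hqy (ε / 2) (by positivity))).exists
    refine mem_biUnion ⟨hqI k, hkA⟩ (Metric.mem_ball.mpr ?_)
    linarith [dist_triangle z y ((q k)⁻¹ • R (q k)), dist_comm z y, dist_comm y ((q k)⁻¹ • R (q k))]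
  have hcompact : IsCompact (closure (FSet n I R)) :=
    hK.of_isClosed_subset isClosed_closure
      (hK.isClosed.closure_subset_iff.mpr (FSet_subset_of_isClosed hK.isClosed hRK))
  obtain ⟨S, hSI, hSfin, hS⟩ :=
    hcompact.elim_finite_subcover_image (fun _ _ => Metric.isOpen_ball) hcover
  obtain ⟨B, hB⟩ := hSfin.bddAbove
  filter_upwards [eventually_ge_atTop B] with B' hB' y hy
  obtain ⟨s, hs, hys⟩ := mem_iUnion₂.mp (hS (subset_closure hy))
  exact ⟨s, (hSI hs).1, (hSI hs).2, (hB hs).trans hB',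
    Metric.mem_ball.mp hys |>.trans_eq' (dist_comm _ _)⟩

end LimitSet

section Lift

variable {n : ℕ} {I : Set ℝ} {R : ℝ → RVec n} {a b q : ℝ}

def IsRigidPoint (n : ℕ) (δ : ℝ) (p : RVec n) : Prop :=
  (∀ i, 0 < p i) ∧ StrictMono p ∧ ∀ i, ∃ m : ℤ, p i = δ * m

lemma IsRigid.isRigidPoint {δ : ℝ} (hR : IsRigid n δ I R) (hq : IsSwitchNumber n I R q) :
    IsRigidPoint n δ (R q) :=
  ⟨(hR.1.2.2.2 q hq).1, (hR.1.2.2.2 q hq).2, hR.2 q hq⟩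

lemma isRigid_of_isRigidPoint {δ : ℝ} (hR : IsNSystem n I R) (hIc : IsClosed I)
    (hI : I ⊆ Ioi 0) (hsw : ∀ q, IsSwitchNumber n I R q → IsRigidPoint n δ (R q)) :
    IsRigid n δ I R :=
  ⟨⟨hR, hIc, hI, fun q hq => ⟨(hsw q hq).1, (hsw q hq).2.1⟩⟩, fun q hq => (hsw q hq).2.2⟩

lemma IsNSystem.restrict (hR : IsNSystem n I R) (hab : a < b) (hsub : Icc a b ⊆ I) :
    IsNSystem n (Icc a b) R := by
  refine ⟨hsub.trans hR.1, ordConnected_Icc, by simpa [interior_Icc] using hab, fun q hq => ?_⟩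
  obtain ⟨hcoord, ε, hε, k, ℓ, hleft, hright, hmerge⟩ := hR.2.2.2 q (hsub hq)
  exact ⟨hcoord, ε, hε, k, ℓ, fun t ht => hleft t ⟨hsub ht.1, ht.2⟩,
    fun t ht => hright t ⟨hsub ht.1, ht.2⟩, fun hq' => hmerge (interior_mono hsub hq')⟩

lemma IsSwitchNumber.of_restrict (hsub : Icc a b ⊆ I) (hq : IsSwitchNumber n (Icc a b) R q) :
    q = a ∨ q = b ∨ IsSwitchNumber n I R q := by
  obtain ⟨hqab, hfr | ⟨hint, ε, hε, k, ℓ, hkℓ, hleft, hright⟩⟩ := hq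
  · rw [frontier_Icc (hqab.1.trans hqab.2)] at hfr
    exact hfr.imp_right Or.inl
  refine Or.inr (Or.inr ⟨hsub hqab, Or.inr ⟨interior_mono hsub hint, ?_⟩⟩)
  rw [interior_Icc] at hint
  set ε' := min ε (min (q - a) (b - q))
  have hε' : ε' ≤ ε := min_le_left _ _
  have hqa : ε' ≤ q - a := (min_le_right _ _).trans (min_le_left _ _)
  have hbq : ε' ≤ b - q := (min_le_right _ _).trans (min_le_right _ _)
  refine ⟨ε', lt_min hε (lt_min (by linarith [hint.1]) (by linarith [hint.2])), k, ℓ, hkℓ, ?_, ?_⟩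
    <;> rintro t ⟨-, ht₁, ht₂⟩
  · exact hleft t ⟨⟨by linarith, by linarith [hint.2]⟩, by linarith, ht₂⟩
  · exact hright t ⟨⟨by linarith [hint.1], by linarith⟩, ht₁, by linarith⟩

def liftSys (n : ℕ) (h : ℝ) (R : ℝ → RVec n) : ℝ → RVec n :=
  fun t i => R (t - n * h) i + h

variable {h : ℝ}

lemma liftSys_eq_add_smul_iff {t : ℝ} {E : RVec n} :
    liftSys n h R t = liftSys n h R q + (t - q) • E ↔
      R (t - n * h) = R (q - n * h) + (t - n * h - (q - n * h)) • E := by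
  simp only [funext_iff, liftSys, Pi.add_apply, Pi.smul_apply, smul_eq_mul]
  exact forall_congr' fun i => by constructor <;> intro H <;> linarith

lemma IsNSystem.lift (hR : IsNSystem n (Icc a b) R) (hh : 0 ≤ h) :
    IsNSystem n (Icc (a + n * h) (b + n * h)) (liftSys n h R) := by
  obtain ⟨hI0, -, hint, hsys⟩ := hR
  have hab : a < b := by simpa [interior_Icc] using hint
  have ha : 0 ≤ a := hI0 (left_mem_Icc.mpr hab.le)
  refine ⟨fun t ht => le_trans (by positivity) ht.1, ordConnected_Icc,
    by simpa [interior_Icc] using hab, fun q hq => ?_⟩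
  have hq' : q - n * h ∈ Icc a b := ⟨by linarith [hq.1], by linarith [hq.2]⟩
  obtain ⟨⟨hnonneg, hmono, hsum⟩, ε, hε, k, ℓ, hleft, hright, hmerge⟩ := hsys _ hq'
  refine ⟨⟨fun i => by simp only [liftSys]; linarith [hnonneg i],
    fun i j hij => by simpa [liftSys] using hmono hij, ?_⟩, ε, hε, k, ℓ, ?_, ?_, ?_⟩
  · simp [liftSys, Finset.sum_add_distrib, hsum]
  · rintro t ⟨ht, ht'⟩
    exact liftSys_eq_add_smul_iff.mpr (hleft _ ⟨⟨by linarith [ht.1], by linarith [ht.2]⟩,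
      by linarith [ht'.1], by linarith [ht'.2]⟩)
  · rintro t ⟨ht, ht'⟩
    exact liftSys_eq_add_smul_iff.mpr (hright _ ⟨⟨by linarith [ht.1], by linarith [ht.2]⟩,
      by linarith [ht'.1], by linarith [ht'.2]⟩)
  · intro hqint hℓk i hℓi hik
    rw [interior_Icc] at hqint
    simp only [liftSys]
    rw [hmerge (by rw [interior_Icc]; exact ⟨by linarith [hqint.1], by linarith [hqint.2]⟩)
      hℓk i hℓi hik]

lemma IsSwitchNumber.of_lift (hq : IsSwitchNumber n (Icc (a + n * h) (b + n * h))
    (liftSys n h R) q) : IsSwitchNumber n (Icc a b) R (q - n * h) := by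
  obtain ⟨hqab, hfr | ⟨hint, ε, hε, k, ℓ, hkℓ, hleft, hright⟩⟩ := hq
  · have hab : a ≤ b := by linarith [hqab.1, hqab.2]
    refine ⟨⟨by linarith [hqab.1], by linarith [hqab.2]⟩, Or.inl ?_⟩
    rw [frontier_Icc (by linarith)] at hfr
    rw [frontier_Icc hab]
    rcases hfr with rfl | rfl
    · left; ring
    · right; simp
  rw [interior_Icc] at hint
  refine ⟨⟨by linarith [hint.1], by linarith [hint.2]⟩, Or.inr ⟨?_, ε, hε, k, ℓ, hkℓ, ?_, ?_⟩⟩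
  · rw [interior_Icc]; exact ⟨by linarith [hint.1], by linarith [hint.2]⟩
  · rintro t ⟨ht, ht'⟩
    simpa using liftSys_eq_add_smul_iff.mp (hleft (t + n * h)
      ⟨⟨by linarith [ht.1], by linarith [ht.2]⟩, by linarith [ht'.1], by linarith [ht'.2]⟩)
  · rintro t ⟨ht, ht'⟩
    simpa using liftSys_eq_add_smul_iff.mp (hright (t + n * h)
      ⟨⟨by linarith [ht.1], by linarith [ht.2]⟩, by linarith [ht'.1], by linarith [ht'.2]⟩)

variable {δ : ℝ}

lemma IsRigid.restrict (hR : IsRigid n δ I R) (hab : a < b) (hsub : Icc a b ⊆ I)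
    (ha : IsRigidPoint n δ (R a)) (hb : IsRigidPoint n δ (R b)) : IsRigid n δ (Icc a b) R := by
  refine isRigid_of_isRigidPoint (hR.1.1.restrict hab hsub) isClosed_Icc
    (hsub.trans hR.1.2.2.1) fun q hq => ?_
  rcases hq.of_restrict hsub with rfl | rfl | hq
  exacts [ha, hb, hR.isRigidPoint hq]

lemma IsRigidPoint.add_const {p : RVec n} (hp : IsRigidPoint n δ p) (hh : 0 ≤ h)
    (hhδ : ∃ m : ℤ, h = δ * m) : IsRigidPoint n δ fun i => p i + h := by
  obtain ⟨hpos, hmono, hmesh⟩ := hp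
  obtain ⟨m, rfl⟩ := hhδ
  refine ⟨fun i => by linarith [hpos i], fun i j hij => by simpa using hmono hij, fun i => ?_⟩
  obtain ⟨z, hz⟩ := hmesh i
  exact ⟨z + m, by simp only [hz]; push_cast; ring⟩

lemma IsRigid.lift (hR : IsRigid n δ (Icc a b) R) (hh : 0 ≤ h) (hhδ : ∃ m : ℤ, h = δ * m) :
    IsRigid n δ (Icc (a + n * h) (b + n * h)) (liftSys n h R) := by
  have hab : a ≤ b := nonempty_Icc.mp (hR.1.1.2.2.1.mono interior_subset)
  have ha : 0 < a := hR.1.2.2.1 (left_mem_Icc.mpr hab)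
  exact isRigid_of_isRigidPoint (hR.1.1.lift hh) isClosed_Icc
    (fun t ht => lt_of_lt_of_le (by positivity) ht.1)
    fun q hq => (hR.isRigidPoint hq.of_lift).add_const hh hhδ

lemma liftSys_slope_right {ε : ℝ} {E : RVec n} (hsub : Icc a b ⊆ I)
    (hslope : ∀ t ∈ I ∩ Icc a (a + ε), R t = R a + (t - a) • E) :
    ∀ t ∈ Icc (a + n * h) (b + n * h) ∩ Icc (a + n * h) (a + n * h + ε),
      liftSys n h R t = liftSys n h R (a + n * h) + (t - (a + n * h)) • E := by
  rintro t ⟨ht, ht'⟩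
  rw [liftSys_eq_add_smul_iff, add_sub_cancel_right]
  exact hslope _ ⟨hsub ⟨by linarith [ht.1], by linarith [ht.2]⟩, by linarith [ht'.1],
    by linarith [ht'.2]⟩

end Lift

section AffineLine
variable {M : Type*} [AddCommGroup M] [Module ℝ M]

lemma add_smul_eq_add_smul_rebase {x y z E : M} {s t u : ℝ}
    (hx : x = z + (s - u) • E) (hy : y = z + (t - u) • E) : x = y + (s - t) • E := by
  subst hx hy
  module

lemma add_smul_sub_trans {x y z E : M} {s t u : ℝ}
    (hx : x = y + (s - t) • E) (hy : y = z + (t - u) • E) : x = z + (s - u) • E := by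
  subst hx hy
  module

lemma eq_and_eq_of_add_smul_eq {p p' E E' : M} {w w' : ℝ} (hw : w ≠ w')
    (h : p + w • E = p' + w • E') (h' : p + w' • E = p' + w' • E') : p = p' ∧ E = E' := by
  have hE : E = E' := by
    have : (w - w') • (E - E') = 0 := by linear_combination (norm := module) h - h'
    exact sub_eq_zero.mp ((smul_eq_zero.mp this).resolve_left (sub_ne_zero.mpr hw))
  subst hE
  exact ⟨add_right_cancel h, rfl⟩

end AffineLine

section Segment

variable {n : ℕ} {I : Set ℝ} {R : ℝ → RVec n}

lemma eVec_eq_eVec_zero {k : Fin n} (h : eVec n k = eVec n 0) : (k : ℕ) = 0 := by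
  by_contra hk
  simpa [eVec, hk] using congrFun h k

lemma IsNSystem.eq_add_smul_of_right (hR : IsNSystem n I R) {a c d : ℝ} {p E : RVec n}
    (ha : a ∈ I) (hd : 0 < d) (h : ∀ s, a < s → s ≤ a + d → s ∈ I ∧ R s = p + (s - c) • E) :
    R a = p + (a - c) • E := by
  obtain ⟨-, ε, hε, k, -, -, hright, -⟩ := hR.2.2.2 a ha
  -- the right piece `R a + w • e_k` of (S2) at `a` meets `p + (a + w - c) • E` at two `w`s
  have hmeet : ∀ w, 0 < w → w ≤ min ε d → R a + w • eVec n k = (p + (a - c) • E) + w • E := by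
    intro w hw hwd
    have hwε := hwd.trans (min_le_left _ _)
    have hwd' := hwd.trans (min_le_right _ _)
    obtain ⟨hwI, hwR⟩ := h (a + w) (by linarith) (by linarith)
    have hwk := hright (a + w) ⟨hwI, by linarith, by linarith⟩
    rw [add_sub_cancel_left] at hwk
    rw [← hwk, hwR]
    module
  have hεd : 0 < min ε d := lt_min hε hd
  exact (eq_and_eq_of_add_smul_eq (by linarith : min ε d ≠ min ε d / 2)
    (hmeet _ hεd le_rfl) (hmeet _ (by linarith) (by linarith))).1

lemma IsNSystem.exists_start_of_slope_segment (hR : IsNSystem n I R) (hIc : IsClosed I)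
    {c ε : ℝ} (hc : c ∈ I)
    (hslope : ∀ t ∈ I ∩ Icc c (c + ε), R t = R c + (t - c) • eVec n 0) :
    ∃ a ≤ c, a ∈ I ∧ (∀ t ∈ I ∩ Icc a (c + ε), R t = R a + (t - a) • eVec n 0) ∧
      ∀ a' < a, Icc a' a ⊆ I → ∃ t ∈ Icc a' a, R t ≠ R a + (t - a) • eVec n 0 := by
  set S := {t | t ≤ c ∧ Icc t c ⊆ I ∧ ∀ s ∈ Icc t c, R s = R c + (s - c) • eVec n 0}
  have hcS : c ∈ S := ⟨le_rfl, by simpa using hc, fun s hs => by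
    obtain rfl := le_antisymm hs.2 hs.1; simp⟩
  have hSI : S ⊆ I := fun t ht => ht.2.1 ⟨le_rfl, ht.1⟩
  have hbdd : BddBelow S := ⟨0, fun t ht => hR.1 (hSI ht)⟩
  set a := sInf S
  have hac : a ≤ c := csInf_le hbdd hcS
  have haI : a ∈ I := hIc.closure_subset_iff.mpr hSI (csInf_mem_closure ⟨c, hcS⟩ hbdd)
  have hgt : ∀ s, a < s → s ≤ c → s ∈ I ∧ R s = R c + (s - c) • eVec n 0 := by
    intro s has hsc
    obtain ⟨t, htS, hts⟩ := exists_lt_of_csInf_lt ⟨c, hcS⟩ has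
    exact ⟨htS.2.1 ⟨hts.le, hsc⟩, htS.2.2 s ⟨hts.le, hsc⟩⟩
  have hRa : R a = R c + (a - c) • eVec n 0 := by
    rcases hac.eq_or_lt with hac | hac
    · rw [hac]; simp
    exact hR.eq_add_smul_of_right haI (sub_pos.mpr hac) fun s has hsc => hgt s has (by linarith)
  refine ⟨a, hac, haI, fun t ⟨htI, hat, htc⟩ => ?_, fun a' ha' hsub => ?_⟩
  · refine add_smul_eq_add_smul_rebase ?_ hRa
    rcases le_or_gt t c with htc' | htc'
    · rcases hat.eq_or_lt with rfl | hat
      · exact hRa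
      · exact (hgt t hat htc').2
    · exact hslope t ⟨htI, htc'.le, htc⟩
  · by_contra! hlin
    have ha'S : a' ∈ S := by
      refine ⟨by linarith, hR.2.1.out (hsub ⟨le_rfl, ha'.le⟩) hc, fun s hs => ?_⟩
      rcases le_or_gt s a with hsa | hsa
      · exact add_smul_sub_trans (hlin s ⟨hs.1, hsa⟩) hRa
      · exact (hgt s hsa hs.2).2
    exact (csInf_le hbdd ha'S).not_gt ha'

lemma IsNSystem.isSwitchNumber_of_segment_start (hR : IsNSystem n I R) (hIc : IsClosed I)
    {a b : ℝ} (ha : a ∈ I) (hab : a < b)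
    (hright : ∀ t ∈ I ∩ Icc a b, R t = R a + (t - a) • eVec n 0)
    (hmin : ∀ a' < a, Icc a' a ⊆ I → ∃ t ∈ Icc a' a, R t ≠ R a + (t - a) • eVec n 0) :
    IsSwitchNumber n I R a := by
  refine ⟨ha, or_iff_not_imp_left.mpr fun hfr => ?_⟩
  have hint : a ∈ interior I := by simpa [hIc.frontier_eq, ha] using hfr
  obtain ⟨ρ, hρ, hball⟩ := Metric.mem_nhds_iff.mp (mem_interior_iff_mem_nhds.mp hint)
  obtain ⟨-, ε, hε, k, ℓ, hleft, hright', -⟩ := hR.2.2.2 a ha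
  set w := min (min ε (ρ / 2)) (b - a)
  have hw : 0 < w := lt_min (lt_min hε (by linarith)) (by linarith)
  have hwε : w ≤ ε := (min_le_left _ _).trans (min_le_left _ _)
  have hwρ : w ≤ ρ / 2 := (min_le_left _ _).trans (min_le_right _ _)
  have hwb : w ≤ b - a := min_le_right _ _
  have hmem : ∀ t, |t - a| ≤ w → t ∈ I := fun t ht =>
    hball (Metric.mem_ball.mpr (by rw [Real.dist_eq]; linarith))
  have hk : (k : ℕ) = 0 := by
    have hI : a + w ∈ I := hmem _ (by simp [abs_of_pos hw])
    have h₁ := hright' (a + w) ⟨hI, by linarith, by linarith⟩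
    rw [hright (a + w) ⟨hI, by linarith, by linarith⟩, add_sub_cancel_left] at h₁
    exact eVec_eq_eVec_zero (smul_right_injective _ hw.ne' (add_left_cancel h₁)).symm
  have hℓ : (ℓ : ℕ) ≠ 0 := by
    intro hℓ
    have hI : a - w ∈ I := hmem _ (by simp [abs_of_pos hw])
    obtain ⟨t, ht, hne⟩ := hmin (a - w) (by linarith) (hR.2.1.out hI ha)
    exact hne (hℓ ▸ hleft t ⟨hR.2.1.out hI ha ht, by linarith [ht.1], ht.2⟩)
  exact ⟨hint, ε, hε, k, ℓ, Fin.lt_def.mpr (by omega), hleft, hright'⟩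

lemma exists_grid_step {δ c d : ℝ} (hδ : 0 < δ) (hd : ∃ m : ℤ, d = δ * m) (hd0 : 0 < d)
    (hc0 : 0 ≤ c) (hcd : c ≤ d) :
    ∃ k : ℤ, 0 ≤ k ∧ δ * k ≤ c ∧ c < δ * k + 2 * δ ∧ δ * k < d := by
  obtain ⟨D, rfl⟩ := hd
  have hD : (1 : ℝ) ≤ D := by
    have : (0 : ℤ) < D := by exact_mod_cast pos_of_mul_pos_right hd0 hδ.le
    exact_mod_cast this
  set F := ⌊c / δ⌋
  have hF₀ : 0 ≤ F := Int.floor_nonneg.mpr (div_nonneg hc0 hδ.le)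
  have hF₁ : δ * F ≤ c := by
    have := mul_le_mul_of_nonneg_left (Int.floor_le (c / δ)) hδ.le
    rwa [mul_div_cancel₀ _ hδ.ne'] at this
  have hF₂ : c < δ * F + δ := by
    have := mul_lt_mul_of_pos_left (Int.lt_floor_add_one (c / δ)) hδ
    rwa [mul_div_cancel₀ _ hδ.ne', mul_add, mul_one] at this
  refine ⟨min F (D - 1), le_min hF₀ (by exact_mod_cast (by linarith : (0 : ℝ) ≤ D - 1)), ?_⟩
  rcases min_cases F (D - 1) with ⟨hk, hle⟩ | ⟨hk, hlt⟩ <;> rw [hk]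
  · have : (F : ℝ) ≤ D - 1 := by exact_mod_cast hle
    refine ⟨hF₁, by linarith, ?_⟩
    nlinarith
  · have : (D : ℝ) - 1 < F := by exact_mod_cast hlt
    push_cast
    refine ⟨by nlinarith, by nlinarith, by nlinarith⟩

variable {δ : ℝ}

lemma IsRigidPoint.add_smul_eVec_zero (hn : 1 < n) {p : RVec n} (hp : IsRigidPoint n δ p)
    {s : ℝ} (hs₀ : 0 ≤ s) (hsδ : ∃ m : ℤ, s = δ * m) (hs : p ⟨0, by omega⟩ + s < p ⟨1, hn⟩) :
    IsRigidPoint n δ (p + s • eVec n 0) := by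
  obtain ⟨hpos, hmono, hmesh⟩ := hp
  obtain ⟨m, rfl⟩ := hsδ
  have hval : ∀ i, (p + (δ * m) • eVec n 0) i = p i + if (i : ℕ) = 0 then δ * m else 0 := by
    intro i
    simp [eVec]
  refine ⟨fun i => ?_, fun i j hij => ?_, fun i => ?_⟩ <;> simp only [hval]
  · split_ifs <;> linarith [hpos i]
  · have hij' : (i : ℕ) < j := hij
    by_cases hi : (i : ℕ) = 0
    · have hi' : i = ⟨0, by omega⟩ := Fin.ext hi
      have h1j : p ⟨1, hn⟩ ≤ p j := hmono.monotone (Fin.le_def.mpr (by simp; omega))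
      rw [if_pos hi, if_neg (by omega), hi']
      linarith
    · rw [if_neg hi, if_neg (by omega)]
      linarith [hmono hij]
  · obtain ⟨z, hz⟩ := hmesh i
    by_cases hi : (i : ℕ) = 0
    · exact ⟨z + m, by rw [if_pos hi, hz]; push_cast; ring⟩
    · exact ⟨z, by rw [if_neg hi, hz, add_zero]⟩

lemma IsRigidPoint.exists_sum_eq {p : RVec n} (hp : IsRigidPoint n δ p) :
    ∃ m : ℤ, ∑ i, p i = δ * m := by
  choose z hz using hp.2.2
  exact ⟨∑ i, z i, by simp [hz, Finset.mul_sum]⟩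

lemma IsRigid.exists_rigidPoint_segment (hn : 1 < n) (hδ : 0 < δ) (hR : IsRigid n δ I R)
    {c ε : ℝ} (hc : c ∈ I) (hε : 0 < ε)
    (hslope : ∀ t ∈ I ∩ Icc c (c + ε), R t = R c + (t - c) • eVec n 0) :
    ∃ a ∈ I, (∃ m : ℤ, a = δ * m) ∧ a ≤ c ∧ c < a + 2 * δ ∧ IsRigidPoint n δ (R a) ∧
      ∀ t ∈ I ∩ Icc a (c + ε), R t = R a + (t - a) • eVec n 0 := by
  have hsys := hR.1.1
  obtain ⟨a₀, ha₀c, ha₀I, hlin, hmin⟩ := hsys.exists_start_of_slope_segment hR.1.2.1 hc hslope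
  have hp := hR.isRigidPoint
    (hsys.isSwitchNumber_of_segment_start hR.1.2.1 ha₀I (by linarith) hlin hmin)
  set i₀ : Fin n := ⟨0, by omega⟩
  set i₁ : Fin n := ⟨1, hn⟩
  obtain ⟨m₀, hm₀⟩ := hp.exists_sum_eq
  rw [(hsys.2.2.2 a₀ ha₀I).1.2.2] at hm₀
  obtain ⟨z₀, hz₀⟩ := hp.2.2 i₀
  obtain ⟨z₁, hz₁⟩ := hp.2.2 i₁
  have hgap : R a₀ i₀ < R a₀ i₁ := hp.2.1 (Fin.lt_def.mpr (by simp [i₀, i₁]))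
  have hc_gap : c - a₀ ≤ R a₀ i₁ - R a₀ i₀ := by
    have hRc := hlin c ⟨hc, ha₀c, by linarith⟩
    have hmono := (hsys.2.2.2 c hc).1.2.1 (Fin.le_def.mpr (by simp [i₀, i₁]) : i₀ ≤ i₁)
    simp [hRc, eVec, i₀, i₁] at hmono
    linarith
  obtain ⟨k, hk₀, hkc, hck, hkgap⟩ := exists_grid_step hδ ⟨z₁ - z₀, by rw [hz₀, hz₁]; push_cast; ring⟩
    (by linarith) (by linarith) hc_gap
  have hk : 0 ≤ δ * k := mul_nonneg hδ.le (by exact_mod_cast hk₀)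
  have haI : a₀ + δ * k ∈ I := hsys.2.1.out ha₀I hc ⟨by linarith, by linarith⟩
  have hRa : R (a₀ + δ * k) = R a₀ + (δ * k) • eVec n 0 := by
    simpa using hlin _ ⟨haI, by linarith, by linarith⟩
  refine ⟨a₀ + δ * k, haI, ⟨m₀ + k, by rw [hm₀]; push_cast; ring⟩, by linarith, by linarith,
    hRa ▸ hp.add_smul_eVec_zero hn hk ⟨k, rfl⟩ (by linarith), fun t ht =>
      add_smul_eq_add_smul_rebase (hlin t ⟨ht.1, by linarith [ht.2.1], ht.2.2⟩) (by simpa using hRa)⟩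

end Segment

lemma coord_bounds_of_near_before {a c Ra Rc x η δ e : ℝ} (hη : 0 < η)
    (hx₀ : 0 ≤ x) (hx₁ : x ≤ 1) (he : e = 0 ∨ e = 1) (hac : a ≤ c) (hca : c < a + 2 * δ)
    (haη : 4 * δ + 2 * δ * η ≤ a * η) (hRc : Rc = Ra + (c - a) * e) (hc : 0 < c)
    (hcx : |c⁻¹ * Rc - x| ≤ η / 2) : a * (x - η) ≤ Ra ∧ Ra ≤ a * (x + η) := by
  obtain ⟨hlo, hhi⟩ := abs_le.mp hcx
  have hRc' : c * (c⁻¹ * Rc) = Rc := by field_simp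
  have h₁ : c * (x - η / 2) ≤ Rc :=
    hRc' ▸ mul_le_mul_of_nonneg_left (by linarith) hc.le
  have h₂ : Rc ≤ c * (x + η / 2) :=
    hRc' ▸ mul_le_mul_of_nonneg_left (by linarith) hc.le
  rcases he with rfl | rfl <;> constructor <;>
    nlinarith [mul_nonneg (sub_nonneg.mpr hac) hx₀, mul_nonneg (sub_nonneg.mpr hac) hη.le]

lemma FSetE1_subset_FSet {n : ℕ} {I : Set ℝ} {R : ℝ → RVec n} : FSetE1 n I R ⊆ FSet n I R :=
  fun _ ⟨q, hqI, hq, hqtop, _, hqx⟩ => ⟨q, hqI, hq, hqtop, hqx⟩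

lemma IsNSystem.FSet_subset_unitCube {n : ℕ} {I : Set ℝ} {R : ℝ → RVec n}
    (hR : IsNSystem n I R) (hI : I ⊆ Ioi 0) :
    FSet n I R ⊆ univ.pi fun _ : Fin n => Icc (0 : ℝ) 1 :=
  FSet_subset_of_isClosed (isClosed_set_pi fun _ _ => isClosed_Icc)
    fun _ hs => hR.inv_smul_mem_unitCube hI hs

lemma IsRigid.exists_anchor {n : ℕ} {I : Set ℝ} {R : ℝ → RVec n} {δ : ℝ} (hn : 1 < n)
    (hδ : 0 < δ) (hR : IsRigid n δ I R) {x : RVec n} (hx : x ∈ FSetE1 n I R) {η : ℝ}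
    (hη : 0 < η) {p : ℝ → Prop} (hp : ∀ᶠ t in atTop, p t) :
    ∃ a ∈ I, p a ∧ (∃ m : ℤ, a = δ * m) ∧ IsRigidPoint n δ (R a) ∧
      (∃ ε > 0, ∀ t ∈ I ∩ Icc a (a + ε), R t = R a + (t - a) • eVec n 0) ∧
      ∀ i, a * (x i - η) ≤ R a i ∧ R a i ≤ a * (x i + η) := by
  have hx₀₁ := hR.1.1.FSet_subset_unitCube hR.1.2.2.1 (FSetE1_subset_FSet hx)
  obtain ⟨T, hT⟩ := eventually_atTop.mp hp
  obtain ⟨q, hqI, -, hqtop, hqslope, hqx⟩ := hx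
  obtain ⟨k, hkT, hkx⟩ := ((hqtop.eventually_ge_atTop (max (T + 2 * δ) (4 * δ / η + 4 * δ))).and
    (Metric.tendsto_nhds.mp hqx (η / 2) (by positivity))).exists
  obtain ⟨ε, hε, hslope⟩ := hqslope k
  obtain ⟨a, haI, hamesh, hac, hca, hap, hlin⟩ :=
    hR.exists_rigidPoint_segment hn hδ (hqI k) hε hslope
  have haT := (le_max_left _ _).trans hkT
  have haη : 4 * δ + 2 * δ * η ≤ a * η := by
    have := (le_max_right _ _).trans hkT
    have : 4 * δ / η + 2 * δ ≤ a := by linarith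
    calc 4 * δ + 2 * δ * η = (4 * δ / η + 2 * δ) * η := by field_simp
      _ ≤ a * η := mul_le_mul_of_nonneg_right this hη.le
  refine ⟨a, haI, hT a (by linarith), hamesh, hap,
    ⟨q k + ε - a, by linarith, fun t ht => hlin t ⟨ht.1, ht.2.1, by linarith [ht.2.2]⟩⟩,
    fun i => coord_bounds_of_near_before hη (hx₀₁ i trivial).1 (hx₀₁ i trivial).2
      (Rc := R (q k) i) (e := if (i : ℕ) = 0 then 1 else 0) (by split_ifs <;> simp) hac hca haη ?_
      (hR.1.2.2.1 (hqI k)) ?_⟩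
  · simpa [eVec] using congrFun (hlin (q k) ⟨hqI k, hac, by linarith⟩) i
  · have := (dist_le_pi_dist _ _ i).trans_lt hkx
    rw [Real.dist_eq] at this
    simpa using this.le

lemma lift_start_bounds {N a h x η ε Ra : ℝ} (hN : 0 ≤ N) (ha : 0 < a) (hx : 0 ≤ x)
    (hε : 0 < ε) (hh₁ : ε * a ≤ h) (hh₂ : h ≤ 2 * ε * a)
    (hηε : η * (1 + 3 * N * ε) ≤ N * ε ^ 2) (hRa : a * (x - η) ≤ Ra ∧ Ra ≤ a * (x + η)) :
    (1 + 3 * N * ε)⁻¹ * (x + ε) ≤ (a + N * h)⁻¹ * (Ra + h) ∧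
      (a + N * h)⁻¹ * (Ra + h) ≤ x + 4 * ε := by
  have hNε : 0 ≤ N * ε := mul_nonneg hN hε.le
  have hNh : 0 ≤ N * h := mul_nonneg hN (by nlinarith)
  have hq : 0 < a + N * h := by linarith
  simp only [inv_mul_eq_div]
  rw [div_le_div_iff₀ (by positivity) hq, div_le_iff₀ hq]
  constructor
  · have hsize : a + N * h ≤ a * (1 + 2 * N * ε) := by nlinarith
    have hgain : (x + ε) * (1 + 2 * N * ε) ≤ (x + ε - η) * (1 + 3 * N * ε) := by
      nlinarith [mul_nonneg hx hNε]
    calc (x + ε) * (a + N * h) ≤ a * (1 + 2 * N * ε) * (x + ε) := by nlinarith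
      _ ≤ a * ((x + ε - η) * (1 + 3 * N * ε)) := by nlinarith
      _ ≤ (Ra + h) * (1 + 3 * N * ε) := by nlinarith
  · nlinarith [mul_nonneg hx hNh]

lemma lift_end_bounds {N b h x ε Rb : ℝ} (hN : 1 ≤ N) (hb : 0 < b) (hh : 0 ≤ h) (hx₀ : 0 ≤ x)
    (hx₁ : x ≤ 1) (hε : 0 < ε) (hNh : N * h ≤ ε * b)
    (hRb : b * (x - ε) ≤ Rb ∧ Rb ≤ b * (x + ε)) :
    x - 2 * ε ≤ (b + N * h)⁻¹ * (Rb + h) ∧ (b + N * h)⁻¹ * (Rb + h) ≤ x + 2 * ε := by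
  have hNh₀ : 0 ≤ N * h := by nlinarith
  rw [le_inv_mul_iff₀ (by linarith), inv_mul_le_iff₀ (by linarith)]
  constructor <;> nlinarith [mul_nonneg hNh₀ (sub_nonneg.mpr hx₁), mul_nonneg hNh₀ hx₀]

lemma abs_lift_sub_le {N s h a ε Rs : ℝ} (hN : 1 ≤ N) (ha : 0 < a) (has : a ≤ s)
    (hR₀ : 0 ≤ Rs) (hRs : Rs ≤ s) (hh : 0 ≤ h) (hh₂ : h ≤ 2 * ε * a) :
    |(s + N * h)⁻¹ * (Rs + h) - s⁻¹ * Rs| ≤ 2 * N * ε := by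
  have hs : 0 < s := ha.trans_le has
  have hq : 0 < s + N * h := by nlinarith
  have hdiff : (s + N * h)⁻¹ * (Rs + h) - s⁻¹ * Rs = h * (s - N * Rs) / (s * (s + N * h)) := by
    field_simp
    ring
  have hε : 0 ≤ ε := by nlinarith
  rw [hdiff, abs_div, abs_mul, abs_of_nonneg hh, abs_of_pos (mul_pos hs hq),
    div_le_iff₀ (mul_pos hs hq)]
  have hz : |s - N * Rs| ≤ N * s := abs_le.mpr ⟨by nlinarith, by nlinarith⟩
  have hh' : h ≤ 2 * ε * (s + N * h) := by
    nlinarith [mul_le_mul_of_nonneg_left has hε, mul_nonneg hε (mul_nonneg (by linarith : 0 ≤ N) hh)]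
  calc h * |s - N * Rs| ≤ 2 * ε * (s + N * h) * (N * s) :=
        mul_le_mul hh' hz (abs_nonneg _) (by positivity)
    _ = 2 * N * ε * (s * (s + N * h)) := by ring

lemma cubeDist_le {n : ℕ} {E F : Set (RVec n)} {r : ℝ} (hr : 0 < r)
    (hEF : ∀ y ∈ E, ∃ z ∈ F, ∀ i, |y i - z i| ≤ r)
    (hFE : ∀ z ∈ F, ∃ y ∈ E, ∀ i, |z i - y i| ≤ r) : cubeDist n E F ≤ r := by
  refine csInf_le ⟨0, fun _ h => h.1.le⟩ ⟨hr, fun y hy => ?_, fun z hz => ?_⟩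
  · obtain ⟨z, hz, hyz⟩ := hEF y hy
    exact ⟨z, hz, y - z, hyz, add_sub_cancel z y⟩
  · obtain ⟨y, hy, hzy⟩ := hFE z hz
    exact ⟨y, hy, z - y, hzy, add_sub_cancel y z⟩

lemma cubeDist_FSet_liftSys_le {n : ℕ} {I : Set ℝ} {R : ℝ → RVec n} (hn : 1 ≤ n)
    (hR : IsNSystem n I R) {a b h ε : ℝ} (ha : 0 < a) (hε : 0 < ε) (hsub : Icc a b ⊆ I)
    (hh : 0 ≤ h) (hh₂ : h ≤ 2 * ε * a)
    (hnear : ∀ s ∈ I, a ≤ s → ∃ y ∈ FSet n I R, dist (s⁻¹ • R s) y < ε)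
    (hwindow : ∀ y ∈ FSet n I R, ∃ s ∈ I, a ≤ s ∧ s ≤ b ∧ dist (s⁻¹ • R s) y < ε) :
    cubeDist n (FSet n I R)
        {y | ∃ q, a + n * h ≤ q ∧ q ≤ b + n * h ∧ y = q⁻¹ • liftSys n h R q} ≤
      (2 * n + 1) * ε := by
  have hn' : (1 : ℝ) ≤ n := by exact_mod_cast hn
  have hcoord : ∀ {p y : RVec n}, dist p y < ε → ∀ i, |p i - y i| ≤ ε := fun {p y} hpy i =>
    (by simpa [Real.dist_eq] using dist_le_pi_dist p y i : |p i - y i| ≤ dist p y).trans hpy.le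
  have hlift : ∀ s ∈ I, a ≤ s → ∀ i,
      |((s + n * h)⁻¹ • liftSys n h R (s + n * h)) i - (s⁻¹ • R s) i| ≤ 2 * n * ε :=
    fun s hs has i => by
      simpa [liftSys] using abs_lift_sub_le hn' ha has (hR.coord_le hs i).1
        (hR.coord_le hs i).2 hh hh₂
  apply cubeDist_le (by positivity)
  · intro y hy
    obtain ⟨s, hsI, has, hsb, hsy⟩ := hwindow y hy
    refine ⟨_, ⟨s + n * h, by linarith, by linarith, rfl⟩, fun i => ?_⟩
    set z := (s + n * h)⁻¹ • liftSys n h R (s + n * h)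
    linarith [abs_sub_le (y i) ((s⁻¹ • R s) i) (z i), abs_sub_comm (y i) ((s⁻¹ • R s) i),
      abs_sub_comm ((s⁻¹ • R s) i) (z i), hcoord hsy i, hlift s hsI has i]
  · rintro _ ⟨q, hq₁, hq₂, rfl⟩
    have hs : q - n * h ∈ I := hsub ⟨by linarith, by linarith⟩
    obtain ⟨y, hy, hsy⟩ := hnear _ hs (by linarith)
    refine ⟨y, hy, fun i => ?_⟩
    have := hlift _ hs (by linarith) i
    rw [sub_add_cancel] at this
    linarith [abs_sub_le ((q⁻¹ • liftSys n h R q) i) (((q - n * h)⁻¹ • R (q - n * h)) i) (y i),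
      hcoord hsy i]

lemma exists_int_mul_mem_Ico {δ : ℝ} (hδ : 0 < δ) (w : ℝ) :
    ∃ m : ℤ, w ≤ δ * m ∧ δ * m < w + δ := by
  refine ⟨⌈w / δ⌉, ?_, ?_⟩
  · have := mul_le_mul_of_nonneg_left (Int.le_ceil (w / δ)) hδ.le
    rwa [mul_div_cancel₀ _ hδ.ne'] at this
  · have := mul_lt_mul_of_pos_left (Int.ceil_lt_add_one (w / δ)) hδ
    rwa [mul_add, mul_div_cancel₀ _ hδ.ne', mul_one] at this

lemma exists_nat_mul_eq_of_pos {δ u : ℝ} (hδ : 0 < δ) (hu : 0 < u) (h : ∃ m : ℤ, u = δ * m) :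
    ∃ k : ℕ, 0 < k ∧ u = k * δ := by
  obtain ⟨m, rfl⟩ := h
  have hm : 0 < m := by exact_mod_cast pos_of_mul_pos_right hu hδ.le
  lift m to ℕ using hm.le
  exact ⟨m, by exact_mod_cast hm, by push_cast; ring⟩

theorem refined_approximation_general (n : ℕ) (hn : 2 ≤ n) (δ : ℝ) (hδ : 0 < δ)
    (I : Set ℝ) (R : ℝ → RVec n) (hR : IsRigid n δ I R)
    (x : RVec n) (hx : x ∈ FSetE1 n I R)
    (ε₁ ε₂ Q : ℝ) (hε₁ : 0 < ε₁) (hε₂ : 0 < ε₂) :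
    ∃ u v : ℝ, (∃ a : ℕ, 0 < a ∧ u = a * δ) ∧ (∃ b : ℕ, 0 < b ∧ v = b * δ) ∧
      Q < u ∧ u < v ∧
      ∃ P : ℝ → RVec n, IsRigid n δ (Set.Icc u v) P ∧
        (∃ ε > (0 : ℝ), ∀ t ∈ Set.Icc u v ∩ Set.Icc u (u + ε),
          P t = P u + (t - u) • eVec n 0) ∧
        (∀ i, (1 + 3 * n * ε₁)⁻¹ * (x i + ε₁) ≤ u⁻¹ * P u i ∧
              u⁻¹ * P u i ≤ x i + 4 * ε₁) ∧
        (∀ i, x i - 2 * ε₂ ≤ v⁻¹ * P v i ∧ v⁻¹ * P v i ≤ x i + 2 * ε₂) ∧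
        cubeDist n (FSet n I R) {y : RVec n | ∃ q, u ≤ q ∧ q ≤ v ∧ y = q⁻¹ • P q}
          ≤ 4 * (n + 1) * ε₁ := by
  have hsys := hR.1.1
  have hI := hR.1.2.2.1
  have hn' : (2 : ℝ) ≤ n := by exact_mod_cast hn
  have hcube : IsCompact (univ.pi fun _ : Fin n => Icc (0 : ℝ) 1) :=
    isCompact_univ_pi fun _ => isCompact_Icc
  have hK : ∀ s ∈ I, s⁻¹ • R s ∈ univ.pi fun _ : Fin n => Icc (0 : ℝ) 1 :=
    fun _ hs => hsys.inv_smul_mem_unitCube hI hs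
  have hx₀₁ := hsys.FSet_subset_unitCube hI (FSetE1_subset_FSet hx)
  obtain ⟨η, hη, hηε⟩ : ∃ η > 0, η * (1 + 3 * n * ε₁) ≤ n * ε₁ ^ 2 :=
    ⟨n * ε₁ ^ 2 / (1 + 3 * n * ε₁), by positivity, (div_mul_cancel₀ _ (by positivity)).le⟩
  obtain ⟨a, haI, ⟨haQ, hanear, haδ⟩, ⟨α, hα⟩, hap, ⟨ε, hε, hslope⟩, hxa⟩ :=
    hR.exists_anchor (by omega) hδ hx hη ((eventually_gt_atTop Q).and
      ((eventually_forall_ge_atTop.mpr (eventually_near_FSet hcube hK hε₁)).and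
      ((tendsto_id.const_mul_atTop hε₁).eventually_ge_atTop δ)))
  have ha₀ : 0 < a := hI haI
  obtain ⟨H, hH₁, hH₂⟩ := exists_int_mul_mem_Ico hδ (ε₁ * a)
  set h := δ * H
  have hh : 0 ≤ h := by nlinarith
  obtain ⟨b, hbI, ⟨hbwindow, hab, hbh⟩, ⟨β, hβ⟩, hbp, -, hxb⟩ :=
    hR.exists_anchor (by omega) hδ hx hε₂ ((eventually_window_near_FSet hcube hK hε₁ a).and
      ((eventually_gt_atTop a).and ((tendsto_id.const_mul_atTop hε₂).eventually_ge_atTop (n * h))))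
  simp only [id] at haδ hbh
  have hsub : Icc a b ⊆ I := hsys.2.1.out haI hbI
  refine ⟨a + n * h, b + n * h,
    exists_nat_mul_eq_of_pos hδ (by nlinarith) ⟨α + n * H, by rw [hα]; push_cast; ring⟩,
    exists_nat_mul_eq_of_pos hδ (by nlinarith) ⟨β + n * H, by rw [hβ]; push_cast; ring⟩,
    by nlinarith, by linarith, liftSys n h R, (hR.restrict hab hsub hap hbp).lift hh ⟨H, rfl⟩,
    ⟨ε, hε, liftSys_slope_right hsub hslope⟩, fun i => ?_, fun i => ?_, ?_⟩
  · simpa [liftSys] using lift_start_bounds (Nat.cast_nonneg n) ha₀ (hx₀₁ i trivial).1 hε₁ hH₁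
      (by linarith) hηε (hxa i)
  · simpa [liftSys] using lift_end_bounds (by linarith : (1 : ℝ) ≤ n) (hI hbI) hh (hx₀₁ i trivial).1
      (hx₀₁ i trivial).2 hε₂ (by simpa [mul_comm] using hbh) (hxb i)
  · exact (cubeDist_FSet_liftSys_le (by omega) hsys ha₀ hε₁ hsub hh (by linarith)
      (fun s hs has => hanear s has hs) hbwindow).trans (by nlinarith)

/-- **Proposition (refined approximation).** Let `R` be a proper rigid `n`-system of
mesh `δ` and `x ∈ F(R, e₁)`.  For any `ε₁, ε₂ > 0` and any bound `Q > 0` there are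
positive multiples `u < v` of `δ` with `Q < u` and a rigid `n`-system
`P : [u,v] → Δ_n` of mesh `δ` with: (i) right derivative `e₁` at `u`;
(ii) `(1+3nε₁)⁻¹(x + ε₁e) ≤ u⁻¹P(u) ≤ x + 4ε₁e`;
(iii) `x − 2ε₂e ≤ v⁻¹P(v) ≤ x + 2ε₂e`;
(iv) `dist(F(R), E) ≤ 4(n+1)ε₁` where `E = {q⁻¹P(q) : q ∈ [u,v]}`. -/
theorem refined_approximation (n : ℕ) (hn : 2 ≤ n) (δ : ℝ) (hδ : 0 < δ)
    (I : Set ℝ) (R : ℝ → RVec n) (hR : IsRigid n δ I R) (hprop : IsProperSys n I R)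
    (x : RVec n) (hx : x ∈ FSetE1 n I R)
    (ε₁ ε₂ Q : ℝ) (hε₁ : 0 < ε₁) (hε₂ : 0 < ε₂) (hQ : 0 < Q) :
    ∃ u v : ℝ, (∃ a : ℕ, 0 < a ∧ u = a * δ) ∧ (∃ b : ℕ, 0 < b ∧ v = b * δ) ∧
      Q < u ∧ u < v ∧
      ∃ P : ℝ → RVec n, IsRigid n δ (Set.Icc u v) P ∧
        (∃ ε > (0 : ℝ), ∀ t ∈ Set.Icc u v ∩ Set.Icc u (u + ε),
          P t = P u + (t - u) • eVec n 0) ∧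
        (∀ i, (1 + 3 * n * ε₁)⁻¹ * (x i + ε₁) ≤ u⁻¹ * P u i ∧
              u⁻¹ * P u i ≤ x i + 4 * ε₁) ∧
        (∀ i, x i - 2 * ε₂ ≤ v⁻¹ * P v i ∧ v⁻¹ * P v i ≤ x i + 2 * ε₂) ∧
        cubeDist n (FSet n I R) {y : RVec n | ∃ q, u ≤ q ∧ q ≤ v ∧ y = q⁻¹ • P q}
          ≤ 4 * (n + 1) * ε₁ :=
  refined_approximation_general n hn δ hδ I R hR x hx ε₁ ε₂ Q hε₁ hε₂
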